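/- Define S_0(v_𝐢) = Q_{c_1(𝐢)} v_𝐢, θ = S_{n−1}⋯S_1, and T_0 = T_1⁻¹ ⋯ T_{n−1}⁻¹ θ S_0. Then T_0 satisfies the cyclotomic relation (T_0 − Q_1)(T_0 − Q_2)⋯(T_0 − Q_m) = 0 on V^{⊗n}. -/

import Mathlib

/-!
Order the basis vectors `v_𝐢` by the colour `c_1(𝐢)` of their first tensor factor. Then `T_0` is
triangular: `T_0 v_𝐢 = Q_{c_1(𝐢)} v_𝐢 + (terms v_𝐣 with c_1(𝐣) > c_1(𝐢))`. The factors `T_0 - Q_r`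
commute, so applying them in increasing order of `r` kills the vectors of colour `r` one layer
at a time, and the product vanishes.

Triangularity comes from a descending induction on `b`: `T_b⁻¹ ⋯ T_{n-1}⁻¹ S_{n-1} ⋯ S_b` fixes
`v_𝐢` modulo vectors `v_𝐣` that agree with `𝐢` before position `b` and have a strictly larger
colour at position `b`. Since `col` is monotone, the order of the entries `i_b, i_{b+1}` follows
the order of their colours; so where `S_b` is the signed swap `s_b`, `T_b⁻¹ s_b v_𝐢` is `v_𝐢` up to
such a vector, and where `S_b = T_b` the factors cancel exactly.
-/

namespace SSW

/-- Tuples indexing basis vectors of the `n`-fold tensor power of a space with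
basis indexed by `Fin N`. -/
abbrev Tup (N n : ℕ) := Fin n → Fin N

/-- The `n`-fold tensor power `V^{⊗ n}` of the superspace `V` with homogeneous basis
`v_1, …, v_N`, realised as the free `K`-module on the set of index tuples. -/
abbrev Ten (K : Type*) [Semiring K] (N n : ℕ) : Type _ := Tup N n →₀ K

/-- The basis vector `v_𝐢 = v_{i_1} ⊗ ⋯ ⊗ v_{i_n}`. -/
noncomputable def bv (K : Type*) [Semiring K] {N n : ℕ} (i : Tup N n) : Ten K N n :=
  Finsupp.single i 1

/-- The position (0-indexed) of the `a`-th tensor factor (1-indexed), clamped. -/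
def fpos (n : ℕ) (hn : 0 < n) (a : ℕ) : Fin n := ⟨min (a - 1) (n - 1), by omega⟩

/-- The `a`-th entry (1-indexed) `i_a` of a tuple `𝐢`. -/
def ent {N n : ℕ} (hn : 0 < n) (i : Tup N n) (a : ℕ) : Fin N := i (fpos n hn a)

/-- The tuple `𝐢 s_a`, with entries `i_a` and `i_{a+1}` interchanged. -/
def swapT {N n : ℕ} (hn : 0 < n) (a : ℕ) (i : Tup N n) : Tup N n :=
  i ∘ Equiv.swap (fpos n hn a) (fpos n hn (a + 1))

/-- `(-1)^x` for a parity `x ∈ ℤ/2`. -/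
def sgn (K : Type*) [Ring K] (x : ZMod 2) : K := if x = 1 then -1 else 1

/-- The parity function of `ℂ^{k|ℓ}`: `ī = 0` for `i ≤ k`, `ī = 1` for `i > k`. -/
def hookPar (k l : ℕ) : Fin (k + l) → ZMod 2 := fun i => if (i : ℕ) < k then 0 else 1

/-- The sign permutation operator `s_a` on `V^{⊗n}` (paper convention: `1 ≤ a ≤ n-1`). -/
noncomputable def sOp (K : Type*) [Field K] {N n : ℕ} (hn : 0 < n)
    (par : Fin N → ZMod 2) (a : ℕ) : Module.End K (Ten K N n) :=
  Finsupp.lift (Ten K N n) K (Tup N n) fun i =>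
    if ent hn i a = ent hn i (a + 1) then
      sgn K (par (ent hn i a)) • bv K i
    else
      sgn K (par (ent hn i a) * par (ent hn i (a + 1))) • bv K (swapT hn a i)

/-- The super Hecke operator `T_a` on `V^{⊗n}` (paper convention: `1 ≤ a ≤ n-1`). -/
noncomputable def TOp (K : Type*) [Field K] (q : K) {N n : ℕ} (hn : 0 < n)
    (par : Fin N → ZMod 2) (a : ℕ) : Module.End K (Ten K N n) :=
  Finsupp.lift (Ten K N n) K (Tup N n) fun i =>
    if ent hn i a < ent hn i (a + 1) then
      (q - q⁻¹) • bv K i +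
        sgn K (par (ent hn i a) * par (ent hn i (a + 1))) • bv K (swapT hn a i)
    else if ent hn i a = ent hn i (a + 1) then
      (((q - q⁻¹) + sgn K (par (ent hn i a)) * (q + q⁻¹)) / 2) • bv K i
    else
      sgn K (par (ent hn i a) * par (ent hn i (a + 1))) • bv K (swapT hn a i)

/-- The inverse `T_a⁻¹ = T_a - (q - q⁻¹)` of the Hecke operator `T_a`. -/
noncomputable def Tinv (K : Type*) [Field K] (q : K) {N n : ℕ} (hn : 0 < n)
    (par : Fin N → ZMod 2) (a : ℕ) : Module.End K (Ten K N n) :=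
  TOp K q hn par a - (q - q⁻¹) • 1

/-- The operator `S_a`: acts as `T_a` when the colors of the `a`-th and `(a+1)`-th
factors agree, and as the signed swap `s_a` otherwise. -/
noncomputable def SOp (K : Type*) [Field K] (q : K) {N n m : ℕ} (hn : 0 < n)
    (par : Fin N → ZMod 2) (col : Fin N → Fin m) (a : ℕ) : Module.End K (Ten K N n) :=
  Finsupp.lift (Ten K N n) K (Tup N n) fun i =>
    if col (ent hn i a) = col (ent hn i (a + 1)) then TOp K q hn par a (bv K i)
    else sOp K hn par a (bv K i)

/-- The inverse `S_a⁻¹` of `S_a`. -/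
noncomputable def Sinv (K : Type*) [Field K] (q : K) {N n m : ℕ} (hn : 0 < n)
    (par : Fin N → ZMod 2) (col : Fin N → Fin m) (a : ℕ) : Module.End K (Ten K N n) :=
  Finsupp.lift (Ten K N n) K (Tup N n) fun i =>
    if col (ent hn i a) = col (ent hn i (a + 1)) then Tinv K q hn par a (bv K i)
    else sOp K hn par a (bv K i)

/-- The operator `S_0 : v_𝐢 ↦ Q_{c_1(𝐢)} v_𝐢`. -/
noncomputable def S0op (K : Type*) [Field K] {N n m : ℕ} (hn : 0 < n)
    (col : Fin N → Fin m) (Q : Fin m → K) : Module.End K (Ten K N n) :=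
  Finsupp.lift (Ten K N n) K (Tup N n) fun i => Q (col (ent hn i 1)) • bv K i

/-- `θ = S_{n-1} ⋯ S_1`. -/
noncomputable def thetaOp (K : Type*) [Field K] (q : K) {N n m : ℕ} (hn : 0 < n)
    (par : Fin N → ZMod 2) (col : Fin N → Fin m) : Module.End K (Ten K N n) :=
  (((List.range (n - 1)).reverse).map fun t => SOp K q hn par col (t + 1)).prod

/-- `T_0 = T_1⁻¹ ⋯ T_{n-1}⁻¹ θ S_0`. -/
noncomputable def T0op (K : Type*) [Field K] (q : K) {N n m : ℕ} (hn : 0 < n)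
    (par : Fin N → ZMod 2) (col : Fin N → Fin m) (Q : Fin m → K) :
    Module.End K (Ten K N n) :=
  (((List.range (n - 1)).map fun t => Tinv K q hn par (t + 1)).prod) *
    thetaOp K q hn par col * S0op K hn col Q

section Triangular

variable {R M : Type*} [CommRing R] [AddCommGroup M] [Module R M]

lemma commute_sub_smul_one (A : Module.End R M) (c d : R) :
    Commute (A - c • 1) (A - d • 1) :=
  ((Commute.refl A).sub_right ((Commute.one_right A).smul_right d)).sub_left
    ((Commute.one_left _).smul_left c)

lemma list_prod_ofFn_sub_smul_one_apply_mem (A : Module.End R M) (U : ℕ → Submodule R M) :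
    ∀ {k : ℕ} (c : Fin k → R), (∀ (r : Fin k), ∀ x ∈ U r, (A - c r • 1) x ∈ U (r + 1)) →
      ∀ x ∈ U 0, (List.ofFn fun r => A - c r • 1).prod x ∈ U k
  | 0, _, _, x, hx => by simpa using hx
  | k + 1, c, hc, x, hx => by
    have hprod : (List.ofFn fun r => A - c r • 1).prod =
        (A - c (Fin.last k) • 1) * (List.ofFn fun r : Fin k => A - c r.castSucc • 1).prod := by
      rw [List.ofFn_succ', List.prod_concat]
      exact (Commute.list_prod_left _ _ fun B hB => by
        obtain ⟨r, rfl⟩ := List.mem_ofFn.mp hB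
        exact commute_sub_smul_one A _ _).eq
    rw [hprod, Module.End.mul_apply]
    simpa using hc (Fin.last k) _
      (list_prod_ofFn_sub_smul_one_apply_mem A U _ (fun r => hc r.castSucc) x hx)

lemma Finsupp.apply_mem_of_mem_supported {ι : Type*} (f : (ι →₀ R) →ₗ[R] M) {s : Set ι}
    {P : Submodule R M} (h : ∀ j ∈ s, f (Finsupp.single j 1) ∈ P) {x : ι →₀ R}
    (hx : x ∈ Finsupp.supported R R s) : f x ∈ P := by
  rw [Finsupp.supported_eq_span_single] at hx
  exact (Submodule.span_le (p := P.comap f)).2 (by rintro _ ⟨j, hj, rfl⟩; exact h j hj) hx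

lemma list_prod_ofFn_sub_smul_one_eq_zero {ι : Type*} {m : ℕ} (g : ι → Fin m) (Q : Fin m → R)
    (A : Module.End R (ι →₀ R))
    (hA : ∀ j, A (Finsupp.single j 1) - Q (g j) • Finsupp.single j 1 ∈
      Finsupp.supported R R {j' | g j < g j'}) :
    (List.ofFn fun r => A - Q r • 1).prod = 0 := by
  let U : ℕ → Submodule R (ι →₀ R) := fun k => Finsupp.supported R R {j | k ≤ g j}
  have hstep (r : Fin m) (x) (hx : x ∈ U r) : (A - Q r • 1) x ∈ U (r + 1) := by
    refine Finsupp.apply_mem_of_mem_supported (A - Q r • 1) (fun j (hj : (r : ℕ) ≤ g j) => ?_) hx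
    have hsplit : (A - Q r • 1) (Finsupp.single j 1) =
        (A (Finsupp.single j 1) - Q (g j) • Finsupp.single j 1) +
          (Q (g j) - Q r) • Finsupp.single j 1 := by
      simp only [LinearMap.sub_apply, LinearMap.smul_apply, Module.End.one_apply, sub_smul]
      abel
    rw [hsplit]
    refine add_mem (Finsupp.supported_mono
      (fun j' (hj' : g j < g j') => Nat.succ_le_of_lt (hj.trans_lt hj')) (hA j)) ?_
    rcases hj.eq_or_lt with hrj | hrj
    · rw [Fin.ext hrj, sub_self, zero_smul]
      exact zero_mem _
    · exact Submodule.smul_mem _ _ (Finsupp.single_mem_supported R 1 (Nat.succ_le_of_lt hrj))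
  refine LinearMap.ext fun x => ?_
  have hx := list_prod_ofFn_sub_smul_one_apply_mem A U Q hstep x
    ((Finsupp.mem_supported R x).2 fun j _ => Nat.zero_le _)
  rw [LinearMap.zero_apply, ← Finsupp.support_eq_empty, Finset.eq_empty_iff_forall_notMem]
  exact fun j hj => (g j).is_lt.not_ge ((Finsupp.mem_supported R _).1 hx hj)

end Triangular

section Operators

variable {K : Type*} [Field K] {q : K} {N n m : ℕ} {hn : 0 < n} {par : Fin N → ZMod 2}
  {col : Fin N → Fin m} {a b : ℕ}

lemma lift_apply_bv (f : Tup N n → Ten K N n) (i : Tup N n) :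
    Finsupp.lift (Ten K N n) K (Tup N n) f (bv K i) = f i := by
  rw [bv, Finsupp.lift_apply, Finsupp.sum_single_index (by simp), one_smul]

lemma sgn_mul_self (x : ZMod 2) : sgn K x * sgn K x = 1 := by
  unfold sgn
  split_ifs <;> simp

lemma ent_swapT_self (i : Tup N n) : ent hn (swapT hn a i) a = ent hn i (a + 1) := by
  simp only [ent, swapT, Function.comp_apply, Equiv.swap_apply_left]

lemma ent_swapT_succ (i : Tup N n) : ent hn (swapT hn a i) (a + 1) = ent hn i a := by
  simp only [ent, swapT, Function.comp_apply, Equiv.swap_apply_right]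

lemma ent_swapT_of_lt {x : ℕ} (hx : 1 ≤ x) (hxa : x < a) (ha : a < n) (i : Tup N n) :
    ent hn (swapT hn a i) x = ent hn i x := by
  simp only [ent, swapT, Function.comp_apply]
  rw [Equiv.swap_apply_of_ne_of_ne] <;> refine Fin.ne_of_val_ne ?_ <;> simp only [fpos] <;> omega

lemma swapT_swapT (i : Tup N n) : swapT hn a (swapT hn a i) = i := by
  funext p
  simp [swapT, Equiv.swap_apply_self]

lemma sOp_bv_of_ne (i : Tup N n) (h : ent hn i a ≠ ent hn i (a + 1)) :
    sOp K hn par a (bv K i) =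
      sgn K (par (ent hn i a) * par (ent hn i (a + 1))) • bv K (swapT hn a i) := by
  rw [sOp, lift_apply_bv, if_neg h]

lemma TOp_bv_of_lt {i : Tup N n} (h : ent hn i a < ent hn i (a + 1)) :
    TOp K q hn par a (bv K i) = (q - q⁻¹) • bv K i +
      sgn K (par (ent hn i a) * par (ent hn i (a + 1))) • bv K (swapT hn a i) := by
  rw [TOp, lift_apply_bv, if_pos h]

lemma TOp_bv_of_eq {i : Tup N n} (h : ent hn i a = ent hn i (a + 1)) :
    TOp K q hn par a (bv K i) =
      (((q - q⁻¹) + sgn K (par (ent hn i a)) * (q + q⁻¹)) / 2) • bv K i := by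
  rw [TOp, lift_apply_bv, if_neg h.not_lt, if_pos h]

lemma TOp_bv_of_gt {i : Tup N n} (h : ent hn i (a + 1) < ent hn i a) :
    TOp K q hn par a (bv K i) =
      sgn K (par (ent hn i a) * par (ent hn i (a + 1))) • bv K (swapT hn a i) := by
  rw [TOp, lift_apply_bv, if_neg h.not_gt, if_neg h.ne']

lemma Tinv_apply (x : Ten K N n) :
    Tinv K q hn par a x = TOp K q hn par a x - (q - q⁻¹) • x := rfl

lemma Tinv_bv_of_lt {i : Tup N n} (h : ent hn i a < ent hn i (a + 1)) :
    Tinv K q hn par a (bv K i) =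
      sgn K (par (ent hn i a) * par (ent hn i (a + 1))) • bv K (swapT hn a i) := by
  rw [Tinv_apply, TOp_bv_of_lt h, add_sub_cancel_left]

lemma Tinv_bv_swapT_of_lt {i : Tup N n} (h : ent hn i a < ent hn i (a + 1)) :
    Tinv K q hn par a (bv K (swapT hn a i)) =
      sgn K (par (ent hn i a) * par (ent hn i (a + 1))) • bv K i -
        (q - q⁻¹) • bv K (swapT hn a i) := by
  have h' : ent hn (swapT hn a i) (a + 1) < ent hn (swapT hn a i) a := by
    rwa [ent_swapT_self, ent_swapT_succ]
  rw [Tinv_apply, TOp_bv_of_gt h', swapT_swapT, ent_swapT_self, ent_swapT_succ, mul_comm]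

lemma Tinv_bv_swapT_of_gt {i : Tup N n} (h : ent hn i (a + 1) < ent hn i a) :
    Tinv K q hn par a (bv K (swapT hn a i)) =
      sgn K (par (ent hn i a) * par (ent hn i (a + 1))) • bv K i := by
  have h' : ent hn (swapT hn a i) a < ent hn (swapT hn a i) (a + 1) := by
    rwa [ent_swapT_self, ent_swapT_succ]
  rw [Tinv_bv_of_lt h', swapT_swapT, ent_swapT_self, ent_swapT_succ, mul_comm]

lemma Tinv_TOp_bv (hq : q ≠ 0) (h2 : (2 : K) ≠ 0) (i : Tup N n) :
    Tinv K q hn par a (TOp K q hn par a (bv K i)) = bv K i := by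
  have hsgn := sgn_mul_self (K := K) (par (ent hn i a) * par (ent hn i (a + 1)))
  rcases lt_trichotomy (ent hn i a) (ent hn i (a + 1)) with h | h | h
  · rw [TOp_bv_of_lt h, map_add, map_smul, map_smul, Tinv_bv_of_lt h, Tinv_bv_swapT_of_lt h,
      smul_sub, smul_smul, smul_smul, smul_smul, hsgn, one_smul, mul_comm]
    abel
  · have hscalar : ((q - q⁻¹) + sgn K (par (ent hn i a)) * (q + q⁻¹)) / 2 *
        (((q - q⁻¹) + sgn K (par (ent hn i a)) * (q + q⁻¹)) / 2 - (q - q⁻¹)) = 1 := by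
      unfold sgn
      split_ifs <;> field_simp <;> ring
    rw [TOp_bv_of_eq h, map_smul, Tinv_apply, TOp_bv_of_eq h, smul_sub, smul_smul, smul_smul,
      ← sub_smul, ← mul_sub, hscalar, one_smul]
  · rw [TOp_bv_of_gt h, map_smul, Tinv_bv_swapT_of_gt h, smul_smul, hsgn, one_smul]

lemma TOp_bv_mem_supported {s : Set (Tup N n)} {i : Tup N n} (hi : i ∈ s)
    (hi' : swapT hn a i ∈ s) : TOp K q hn par a (bv K i) ∈ Finsupp.supported K K s := by
  have h1 := Finsupp.single_mem_supported K (1 : K) hi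
  have h2 := Finsupp.single_mem_supported K (1 : K) hi'
  rw [TOp, lift_apply_bv]
  split_ifs
  · exact add_mem (Submodule.smul_mem _ _ h1) (Submodule.smul_mem _ _ h2)
  · exact Submodule.smul_mem _ _ h1
  · exact Submodule.smul_mem _ _ h2

lemma Tinv_bv_mem_supported {s : Set (Tup N n)} {i : Tup N n} (hi : i ∈ s)
    (hi' : swapT hn a i ∈ s) : Tinv K q hn par a (bv K i) ∈ Finsupp.supported K K s :=
  sub_mem (TOp_bv_mem_supported hi hi')
    (Submodule.smul_mem _ _ (Finsupp.single_mem_supported K 1 hi))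

def AgreeBelow (hn : 0 < n) (b : ℕ) (j i : Tup N n) : Prop :=
  ∀ x, 1 ≤ x → x < b → ent hn j x = ent hn i x

def colorRaised (hn : 0 < n) (col : Fin N → Fin m) (b : ℕ) (i : Tup N n) : Set (Tup N n) :=
  {j | AgreeBelow hn b j i ∧ col (ent hn i b) < col (ent hn j b)}

lemma AgreeBelow.refl (i : Tup N n) : AgreeBelow hn b i i := fun _ _ _ => rfl

lemma AgreeBelow.trans {i j k : Tup N n} (hjk : AgreeBelow hn b j k) (hki : AgreeBelow hn b k i) :
    AgreeBelow hn b j i := fun x hx hxb => (hjk x hx hxb).trans (hki x hx hxb)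

lemma AgreeBelow.of_succ {i j : Tup N n} (h : AgreeBelow hn (b + 1) j i) : AgreeBelow hn b j i :=
  fun x hx hxb => h x hx (by omega)

lemma agreeBelow_swapT (ha : a < n) (i : Tup N n) : AgreeBelow hn a (swapT hn a i) i :=
  fun _ hx hxa => ent_swapT_of_lt hx hxa ha i

lemma Tinv_bv_mem_colorRaised (hcol : Monotone col) (ha : a < n) {i j : Tup N n}
    (hj : AgreeBelow hn a j i) (hc : col (ent hn i a) < col (ent hn j (a + 1))) :
    Tinv K q hn par a (bv K j) ∈ Finsupp.supported K K (colorRaised hn col a i) := by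
  have hswap : swapT hn a j ∈ colorRaised hn col a i :=
    ⟨(agreeBelow_swapT ha j).trans hj, by rwa [ent_swapT_self]⟩
  by_cases hja : col (ent hn i a) < col (ent hn j a)
  · exact Tinv_bv_mem_supported ⟨hj, hja⟩ hswap
  · have hlt : ent hn j a < ent hn j (a + 1) := hcol.reflect_lt ((not_lt.1 hja).trans_lt hc)
    rw [Tinv_bv_of_lt hlt]
    exact Submodule.smul_mem _ _ (Finsupp.single_mem_supported K 1 hswap)

lemma Tinv_mem_colorRaised (hcol : Monotone col) (ha : a < n) {i k : Tup N n}
    (hk : AgreeBelow hn a k i) (hc : col (ent hn i a) ≤ col (ent hn k (a + 1))) {x : Ten K N n}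
    (hx : x ∈ Finsupp.supported K K (colorRaised hn col (a + 1) k)) :
    Tinv K q hn par a x ∈ Finsupp.supported K K (colorRaised hn col a i) :=
  Finsupp.apply_mem_of_mem_supported _
    (fun _ hj => Tinv_bv_mem_colorRaised hcol ha (hj.1.of_succ.trans hk) (hc.trans_lt hj.2)) hx

lemma SOp_bv_mem_supported (ha : a < n) (i : Tup N n) :
    SOp K q hn par col a (bv K i) ∈ Finsupp.supported K K
      {k | AgreeBelow hn a k i ∧ col (ent hn i a) ≤ col (ent hn k (a + 1))} := by
  have hswap : swapT hn a i ∈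
      {k | AgreeBelow hn a k i ∧ col (ent hn i a) ≤ col (ent hn k (a + 1))} :=
    ⟨agreeBelow_swapT ha i, by rw [ent_swapT_succ]⟩
  rw [SOp, lift_apply_bv]
  split_ifs with hcc
  · exact TOp_bv_mem_supported ⟨AgreeBelow.refl i, hcc.le⟩ hswap
  · rw [sOp_bv_of_ne i fun h => hcc (congrArg col h)]
    exact Submodule.smul_mem _ _ (Finsupp.single_mem_supported K 1 hswap)

lemma Tinv_SOp_bv_sub_mem (hq : q ≠ 0) (h2 : (2 : K) ≠ 0) (hcol : Monotone col) (ha : a < n)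
    (i : Tup N n) : Tinv K q hn par a (SOp K q hn par col a (bv K i)) - bv K i ∈
      Finsupp.supported K K (colorRaised hn col a i) := by
  rw [SOp, lift_apply_bv]
  split_ifs with hcc
  · rw [Tinv_TOp_bv hq h2, sub_self]
    exact zero_mem _
  rw [sOp_bv_of_ne i fun h => hcc (congrArg col h), map_smul]
  rcases lt_or_gt_of_ne hcc with hlt | hgt
  · rw [Tinv_bv_swapT_of_lt (hcol.reflect_lt hlt), smul_sub, smul_smul, sgn_mul_self, one_smul,
      sub_sub_cancel_left]
    exact neg_mem (Submodule.smul_mem _ _ (Submodule.smul_mem _ _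
      (Finsupp.single_mem_supported K 1 ⟨agreeBelow_swapT ha i, by rwa [ent_swapT_self]⟩)))
  · rw [Tinv_bv_swapT_of_gt (hcol.reflect_lt hgt), smul_smul, sgn_mul_self, one_smul, sub_self]
    exact zero_mem _

lemma Tinv_mul_mul_SOp_bv_sub_mem (hq : q ≠ 0) (h2 : (2 : K) ≠ 0) (hcol : Monotone col)
    (ha : a < n) {D : Module.End K (Ten K N n)}
    (hD : ∀ k, D (bv K k) - bv K k ∈ Finsupp.supported K K (colorRaised hn col (a + 1) k))
    (i : Tup N n) : (Tinv K q hn par a * D * SOp K q hn par col a) (bv K i) - bv K i ∈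
      Finsupp.supported K K (colorRaised hn col a i) := by
  have hsplit : (Tinv K q hn par a * D * SOp K q hn par col a) (bv K i) - bv K i =
      Tinv K q hn par a ((D - 1) (SOp K q hn par col a (bv K i))) +
        (Tinv K q hn par a (SOp K q hn par col a (bv K i)) - bv K i) := by
    simp only [Module.End.mul_apply, LinearMap.sub_apply, Module.End.one_apply, map_sub]
    abel
  have herror : ∀ k ∈ {k | AgreeBelow hn a k i ∧ col (ent hn i a) ≤ col (ent hn k (a + 1))},
      (Tinv K q hn par a ∘ₗ (D - 1)) (bv K k) ∈ Finsupp.supported K K (colorRaised hn col a i) :=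
    fun k hk => by
      rw [LinearMap.comp_apply, LinearMap.sub_apply, Module.End.one_apply]
      exact Tinv_mem_colorRaised hcol ha hk.1 hk.2 (hD k)
  rw [hsplit]
  exact add_mem (Finsupp.apply_mem_of_mem_supported _ herror (SOp_bv_mem_supported ha i))
    (Tinv_SOp_bv_sub_mem hq h2 hcol ha i)

end Operators

noncomputable def tailOp (K : Type*) [Field K] (q : K) {N n m : ℕ} (hn : 0 < n)
    (par : Fin N → ZMod 2) (col : Fin N → Fin m) (b : ℕ) : Module.End K (Ten K N n) :=
  ((List.range' b (n - b)).map fun t => Tinv K q hn par t).prod *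
    ((List.range' b (n - b)).reverse.map fun t => SOp K q hn par col t).prod

section TailOp

variable {K : Type*} [Field K] {q : K} {N n m : ℕ} {hn : 0 < n} {par : Fin N → ZMod 2}
  {col : Fin N → Fin m}

lemma tailOp_self : tailOp K q hn par col n = 1 := by
  simp [tailOp]

lemma tailOp_of_lt {b : ℕ} (hb : b < n) : tailOp K q hn par col b =
    Tinv K q hn par b * tailOp K q hn par col (b + 1) * SOp K q hn par col b := by
  rw [tailOp, tailOp, show n - b = n - (b + 1) + 1 by omega, List.range'_succ]
  simp only [List.map_cons, List.prod_cons, List.reverse_cons, List.map_append, List.prod_append,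
    List.map_nil, List.prod_nil, mul_one, mul_assoc]

lemma tailOp_bv_sub_mem (hq : q ≠ 0) (h2 : (2 : K) ≠ 0) (hcol : Monotone col) {b : ℕ}
    (hb : b ≤ n) : ∀ i, tailOp K q hn par col b (bv K i) - bv K i ∈
      Finsupp.supported K K (colorRaised hn col b i) := by
  induction hb using Nat.decreasingInduction with
  | self =>
    intro i
    rw [tailOp_self, Module.End.one_apply, sub_self]
    exact zero_mem _
  | of_succ b hb ih =>
    rw [tailOp_of_lt hb]
    exact Tinv_mul_mul_SOp_bv_sub_mem hq h2 hcol hb ih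

lemma T0op_eq_tailOp_mul (Q : Fin m → K) :
    T0op K q hn par col Q = tailOp K q hn par col 1 * S0op K hn col Q := by
  have hrange : List.range' 1 (n - 1) = (List.range (n - 1)).map (· + 1) := by
    rw [List.range'_eq_map_range]
    exact List.map_congr_left fun t _ => add_comm 1 t
  simp only [T0op, thetaOp, tailOp, hrange, List.map_map, List.map_reverse, Function.comp_def]

lemma T0op_bv_sub_mem (hq : q ≠ 0) (h2 : (2 : K) ≠ 0) (hcol : Monotone col) (Q : Fin m → K)
    (i : Tup N n) :
    T0op K q hn par col Q (bv K i) - Q (col (ent hn i 1)) • bv K i ∈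
      Finsupp.supported K K {j | col (ent hn i 1) < col (ent hn j 1)} := by
  rw [T0op_eq_tailOp_mul, Module.End.mul_apply, S0op, lift_apply_bv, map_smul, ← smul_sub]
  exact Submodule.smul_mem _ _
    (Finsupp.supported_mono (fun _ hj => hj.2) (tailOp_bv_sub_mem hq h2 hcol hn i))

end TailOp

/-- `T_0 = T_1⁻¹ ⋯ T_{n−1}⁻¹ θ S_0` satisfies the cyclotomic relation
`(T_0 − Q_1)(T_0 − Q_2)⋯(T_0 − Q_m) = 0` on `V^{⊗n}`. -/
theorem stmt11 (K : Type*) [Field K] [CharZero K] (q : K) (hq : q ≠ 0)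
    {N n m : ℕ} (hn : 0 < n) (par : Fin N → ZMod 2)
    (col : Fin N → Fin m) (hcol : Monotone col) (Q : Fin m → K) :
    (List.ofFn fun r : Fin m =>
      T0op K q hn par col Q - Q r • (1 : Module.End K (Ten K N n))).prod = 0 :=
  list_prod_ofFn_sub_smul_one_eq_zero (fun j => col (ent hn j 1)) Q _
    (T0op_bv_sub_mem hq two_ne_zero hcol Q)

end SSW
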